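/- arXiv:2509.05761 — 3 statements merged into one kernel-verified Lean document; each statement's English description precedes it below -/
import Mathlib

section
/- The degenerate Stirling numbers of the second kind {n brace k}_λ, defined by (x)_{n,λ} = Σ_{k=0}^n {n brace k}_λ (x)_k (where (x)_k is the ordinary falling factorial), satisfy the generating function identity (1/k!)(e_λ(t) − 1)^k = Σ_{n=k}^∞ {n brace k}_λ t^n/n! as formal power series, where e_λ(t) = (1+λt)^{1/λ} is interpreted as the formal power series Σ_{m≥0} (1)_{m,λ} t^m/m!. -/
open PowerSeries

/-- The degenerate falling factorial `(x)_{n,λ}`. -/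
def degFall (lam x : ℝ) (n : ℕ) : ℝ := ∏ i ∈ Finset.range n, (x - i * lam)

/-- The ordinary falling factorial `(x)_k`. -/
def fallF (x : ℝ) (k : ℕ) : ℝ := ∏ i ∈ Finset.range k, (x - i)

/-- The degenerate exponential `e_λ^y(t)` as the formal power series
`Σ_{m≥0} (y)_{m,λ} t^m/m!`. -/
noncomputable def degExpP (lam y : ℝ) : PowerSeries ℝ :=
  PowerSeries.mk fun m => degFall lam y m / (Nat.factorial m)

/-!
The map `x ↦ e_λ^x(t)` is an additive character `ℝ → ℝ⟦t⟧` (this is the degenerate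
Chu–Vandermonde identity), so its `k`-th forward difference at `0` is `(e_λ(t) - 1)^k`.
Taking the coefficient of `t^n` turns this into the `k`-th forward difference at `0` of
`x ↦ (x)_{n,λ} / n!`. Expanding `(x)_{n,λ}` in falling factorials and using
`Δ^k (x)_m |_{x=0} = k! δ_{mk}` leaves exactly `k! {n brace k}_λ / n!`.
-/

open Finset Nat
open scoped fwdDiff

theorem PowerSeries.mk_div_factorial_mul_mk_div_factorial {K : Type*} [Field K] [CharZero K]
    (a b : ℕ → K) :
    mk (fun n ↦ a n / n !) * mk (fun n ↦ b n / n !) =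
      mk fun n ↦ (∑ ij ∈ antidiagonal n, (n.choose ij.1 : K) * (a ij.1 * b ij.2)) / n ! := by
  ext n
  rw [coeff_mul, coeff_mk, sum_div]
  refine sum_congr rfl fun ⟨i, j⟩ hij ↦ ?_
  rw [HasAntidiagonal.mem_antidiagonal] at hij
  subst hij
  have hfac : ((i + j).choose i * i ! * j ! : K) = (i + j) ! := by
    rw [choose_symm_add]
    exact_mod_cast add_choose_mul_factorial_mul_factorial i j
  have hchoose : ((i + j).choose i : K) ≠ 0 :=
    Nat.cast_ne_zero.2 (choose_pos (le_add_right i j)).ne'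
  simp only [coeff_mk]
  rw [← hfac]
  field_simp

theorem fwdDiff_iter_addMonoidHom_comp {M G G' : Type*} [AddCommMonoid M] [AddCommGroup G]
    [AddCommGroup G'] (L : G →+ G') (h : M) (f : M → G) (n : ℕ) (x : M) :
    (Δ_[h])^[n] (L ∘ f) x = L ((Δ_[h])^[n] f x) := by
  simp [fwdDiff_iter_eq_sum_shift]

lemma degFall_succ (lam x : ℝ) (n : ℕ) :
    degFall lam x (n + 1) = degFall lam x n * (x - n * lam) :=
  prod_range_succ _ n

lemma degFall_add (lam y z : ℝ) (n : ℕ) :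
    degFall lam (y + z) n =
      ∑ ij ∈ antidiagonal n, (n.choose ij.1 : ℝ) * (degFall lam y ij.1 * degFall lam z ij.2) := by
  induction n with
  | zero => simp [degFall]
  | succ n ih =>
    rw [degFall_succ, ih, sum_mul,
      sum_antidiagonal_choose_succ_mul (fun i j ↦ degFall lam y i * degFall lam z j),
      ← sum_add_distrib]
    refine sum_congr rfl fun ⟨i, j⟩ hij ↦ ?_
    rw [HasAntidiagonal.mem_antidiagonal] at hij
    subst hij
    rw [choose_symm_add, degFall_succ, degFall_succ]
    push_cast
    ring

lemma degExpP_zero (lam : ℝ) : degExpP lam 0 = 1 := by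
  ext (_ | n)
  · simp [degExpP, degFall]
  · simp [degExpP, degFall, prod_range_succ']

noncomputable def degExpChar (lam : ℝ) : AddChar ℝ ℝ⟦X⟧ where
  toFun := degExpP lam
  map_zero_eq_one' := degExpP_zero lam
  map_add_eq_mul' y z := by
    rw [degExpP, degExpP, degExpP, mk_div_factorial_mul_mk_div_factorial]
    simp_rw [degFall_add]

@[simp]
lemma degExpChar_apply (lam x : ℝ) : degExpChar lam x = degExpP lam x := rfl

lemma coeff_fwdDiff_iter_degExpChar (lam : ℝ) (n k : ℕ) (x : ℝ) :
    coeff n ((Δ_[1])^[k] (degExpChar lam) x) = (Δ_[1])^[k] (degFall lam · n) x / n ! := by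
  have hcoeff : (coeff n).toAddMonoidHom ∘ degExpChar lam = (n ! : ℝ)⁻¹ • (degFall lam · n) := by
    ext y
    simp [degExpP, div_eq_inv_mul]
  rw [← LinearMap.toAddMonoidHom_coe, ← fwdDiff_iter_addMonoidHom_comp, hcoeff,
    fwdDiff_iter_const_smul, Pi.smul_apply, smul_eq_mul, inv_mul_eq_div]

lemma fwdDiff_fallF (m : ℕ) : Δ_[1] (fallF · (m + 1)) = fun x ↦ (m + 1 : ℝ) * fallF x m := by
  ext x
  simp only [fwdDiff, fallF]
  rw [prod_range_succ', prod_range_succ]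
  simp only [Nat.cast_add, Nat.cast_one, add_sub_add_right_eq_sub, CharP.cast_eq_zero, sub_zero]
  ring

-- For `m < k` the truncated `m - k` is harmless: `m.descFactorial k = 0`.
lemma fwdDiff_iter_fallF (k m : ℕ) :
    (Δ_[1])^[k] (fallF · m) = fun x ↦ (m.descFactorial k : ℝ) * fallF x (m - k) := by
  induction k with
  | zero => simp
  | succ k ih =>
    rw [Function.iterate_succ_apply', ih, descFactorial_succ]
    change Δ_[1] ((m.descFactorial k : ℝ) • (fallF · (m - k))) = _
    rw [fwdDiff_const_smul]
    rcases hmk : m - k with _ | j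
    · ext x
      simp [fallF]
    · have hj : m - (k + 1) = j := by omega
      rw [fwdDiff_fallF, hj]
      ext x
      simp only [Pi.smul_apply, smul_eq_mul, Nat.cast_mul]
      push_cast
      ring

lemma fwdDiff_iter_fallF_zero (k m : ℕ) :
    (Δ_[1])^[k] (fallF · m) 0 = if m = k then (k ! : ℝ) else 0 := by
  rw [fwdDiff_iter_fallF]
  obtain hlt | rfl | hgt := lt_trichotomy m k
  · simp [descFactorial_eq_zero_iff_lt.mpr hlt, hlt.ne]
  · simp [fallF, descFactorial_self]
  · obtain ⟨j, hj⟩ : ∃ j, m - k = j + 1 := ⟨m - k - 1, by omega⟩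
    simp [hgt.ne', hj, fallF, prod_range_succ']

lemma fwdDiff_iter_degFall_zero {lam : ℝ} {S : ℕ → ℕ → ℝ}
    (hS : ∀ (n : ℕ) (x : ℝ), degFall lam x n = ∑ k ∈ range (n + 1), S n k * fallF x k)
    (n k : ℕ) :
    (Δ_[1])^[k] (degFall lam · n) 0 = if k ≤ n then S n k * k ! else 0 := by
  have hexpand : (degFall lam · n) = ∑ m ∈ range (n + 1), S n m • (fallF · m) := by
    ext x
    simp [hS]
  simp_rw [hexpand, fwdDiff_iter_finsetSum, Finset.sum_apply, fwdDiff_iter_const_smul,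
    Pi.smul_apply, fwdDiff_iter_fallF_zero, smul_eq_mul, mul_ite, mul_zero, sum_ite_eq',
    mem_range, Nat.lt_succ_iff]

/-- The degenerate Stirling numbers of the second kind `S n k = {n brace k}_λ`,
defined by `(x)_{n,λ} = Σ_{k=0}^n {n brace k}_λ (x)_k`, satisfy
`(1/k!)(e_λ(t) − 1)^k = Σ_{n=k}^∞ {n brace k}_λ t^n/n!` as formal power series. -/
theorem stmt1 (lam : ℝ) (S : ℕ → ℕ → ℝ)
    (hS : ∀ (n : ℕ) (x : ℝ),
      degFall lam x n = ∑ k ∈ Finset.range (n + 1), S n k * fallF x k) (k : ℕ) :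
    PowerSeries.C (1 / (Nat.factorial k : ℝ)) * (degExpP lam 1 - 1) ^ k =
      PowerSeries.mk fun n => if k ≤ n then S n k / (Nat.factorial n) else 0 := by
  have hpow : (degExpP lam 1 - 1) ^ k = (Δ_[1])^[k] (degExpChar lam) 0 := by
    simpa using (fwdDiff_addChar_eq (degExpChar lam) 0 1 k).symm
  ext n
  rw [coeff_C_mul, hpow, coeff_fwdDiff_iter_degExpChar, fwdDiff_iter_degFall_zero hS, coeff_mk]
  split_ifs
  · field_simp
  · simp
end

section
/- For all nonnegative integers m and n and any x, the classical Fubini polynomials satisfy F_{n+m}(x) = Σ_{k=0}^m Σ_{l=0}^n k! {m brace k} C(n,l) x^k F_{n−l}^{(k)}(x, k) F_l(x), where F_{j}^{(k)}(x,y) are the two-variable Fubini polynomials of order k. -/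
/-!
Let `G = 1/(1 - x(eᵗ - 1))`, the exponential generating function of the Fubini polynomials,
and `H = G eᵗ`. Then `G' = xGH` and `H' = H + xH²`, so `σₖ = k! xᵏ G Hᵏ` satisfies
`σₖ' = σₖ₊₁ + k σₖ`: differentiation acts on the `σₖ` as multiplication by `x` acts on the
falling factorials `(x)ₖ`. Hence `G⁽ᵐ⁾ = Σₖ {m brace k} σₖ`, just as
`xᵐ = Σₖ {m brace k} (x)ₖ`. Taking the `n`-th coefficient, `G Hᵏ = G · (Gᵏ e^{kt})` is a
product of exponential generating functions, which produces the binomial convolution; at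
`t = 0` the same expansion gives `F_N(x) = Σₖ k! {N brace k} xᵏ`. The hypothesis on `T`
determines `T n k = {n brace k}` for `k ≤ n`, since `(k)ⱼ = 0` for `k < j` and `(k)ₖ = k!`.
-/

open PowerSeries

/-- The two-variable Fubini polynomials of order `k ∈ ℕ`, defined by
`(1/(1 − x(e^t − 1)))^k e^{yt} = Σ_j F_j^{(k)}(x,y) t^j/j!`. -/
noncomputable def fubiniOrd (k : ℕ) (x y : ℝ) (j : ℕ) : ℝ :=
  (Nat.factorial j : ℝ) * PowerSeries.coeff (R := ℝ) j
    (((1 - PowerSeries.C (R := ℝ) x * (PowerSeries.exp ℝ - 1))⁻¹) ^ k *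
      PowerSeries.rescale y (PowerSeries.exp ℝ))

open Finset Nat

theorem iterate_eq_sum_stirlingSecond_smul {M : Type*} [AddCommMonoid M] (L : M →+ M)
    (σ : ℕ → M) (hσ : ∀ k, L (σ k) = σ (k + 1) + k • σ k) (n : ℕ) :
    L^[n] (σ 0) = ∑ k ∈ range (n + 1), stirlingSecond n k • σ k := by
  induction n with
  | zero => simp
  | succ n ih =>
    have hshift : ∑ k ∈ range (n + 1), ((k + 1) * stirlingSecond n (k + 1)) • σ (k + 1) =
        ∑ k ∈ range (n + 1), (k * stirlingSecond n k) • σ k := by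
      calc _ = ∑ k ∈ range (n + 2), (k * stirlingSecond n k) • σ k := by
            rw [sum_range_succ' (fun k ↦ (k * stirlingSecond n k) • σ k)]; simp
        _ = _ := by rw [sum_range_succ, stirlingSecond_eq_zero_of_lt n.lt_succ_self]; simp
    rw [Function.iterate_succ_apply', ih, map_sum,
      sum_range_succ' (fun k ↦ stirlingSecond (n + 1) k • σ k), stirlingSecond_succ_zero,
      zero_smul, add_zero]
    simp only [stirlingSecond_succ_succ, add_smul, sum_add_distrib, hshift, map_nsmul, hσ,
      smul_add, smul_smul]
    rw [add_comm]
    congr 1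
    exact sum_congr rfl fun k _ ↦ by rw [mul_comm]

theorem mul_fallF (x : ℝ) (k : ℕ) : x * fallF x k = fallF x (k + 1) + k • fallF x k := by
  simp only [fallF, prod_range_succ, nsmul_eq_mul]
  ring

theorem pow_eq_sum_stirlingSecond_mul_fallF (x : ℝ) (n : ℕ) :
    x ^ n = ∑ k ∈ range (n + 1), (stirlingSecond n k : ℝ) * fallF x k := by
  have h :=
    iterate_eq_sum_stirlingSecond_smul (AddMonoidHom.mulLeft x) (fallF x) (mul_fallF x) n
  simpa [fallF, mul_left_iterate, nsmul_eq_mul] using h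

theorem fallF_natCast_self (k : ℕ) : fallF k k = k ! := by
  rw [fallF, ← prod_range_add_one_eq_factorial, ← prod_range_reflect, Nat.cast_prod]
  refine prod_congr rfl fun i hi ↦ ?_
  have := mem_range.mp hi
  rw [Nat.cast_sub (by omega), Nat.cast_sub (by omega)]
  push_cast
  ring

theorem fallF_natCast_of_lt {k j : ℕ} (h : k < j) : fallF k j = 0 :=
  prod_eq_zero (mem_range.mpr h) (sub_self _)

theorem eq_zero_of_forall_sum_mul_fallF_eq_zero {N : ℕ} {c : ℕ → ℝ}
    (h : ∀ x, ∑ j ∈ range N, c j * fallF x j = 0) {k : ℕ} (hk : k < N) : c k = 0 := by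
  induction k using Nat.strong_induction_on with
  | _ k ih =>
    have hsum := h k
    rw [sum_eq_single k (fun j hj hjk ↦ ?_) (fun h ↦ absurd (mem_range.mpr hk) h),
      fallF_natCast_self] at hsum
    · exact (mul_eq_zero.mp hsum).resolve_right (by positivity)
    rcases hjk.lt_or_gt with hlt | hgt
    · rw [ih j hlt (hlt.trans hk), zero_mul]
    · rw [fallF_natCast_of_lt hgt, mul_zero]

theorem eq_stirlingSecond_of_pow_eq_sum (T : ℕ → ℕ → ℝ)
    (hT : ∀ (n : ℕ) (x : ℝ), x ^ n = ∑ k ∈ range (n + 1), T n k * fallF x k)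
    {n k : ℕ} (hk : k ≤ n) : T n k = stirlingSecond n k := by
  refine sub_eq_zero.mp <| eq_zero_of_forall_sum_mul_fallF_eq_zero
    (c := fun j ↦ T n j - stirlingSecond n j) (fun x ↦ ?_) (Nat.lt_succ_of_le hk)
  simp only [sub_mul, sum_sub_distrib, ← hT, ← pow_eq_sum_stirlingSecond_mul_fallF, sub_self]

theorem PowerSeries.factorial_mul_coeff_iterate_derivative {R : Type*} [CommSemiring R]
    (f : R⟦X⟧) (n m : ℕ) : n ! * coeff n ((d⁄dX R)^[m] f) = (n + m)! * coeff (n + m) f := by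
  rw [coeff_iterate_derivative, ← factorial_mul_ascFactorial]
  push_cast
  ring

theorem PowerSeries.factorial_mul_coeff_mul {R : Type*} [CommSemiring R] (f g : R⟦X⟧) (n : ℕ) :
    n ! * coeff n (f * g) = ∑ l ∈ range (n + 1),
      (n.choose l : R) * (l ! * coeff l f) * ((n - l)! * coeff (n - l) g) := by
  rw [coeff_mul, Nat.sum_antidiagonal_eq_sum_range_succ_mk, mul_sum]
  refine sum_congr rfl fun l hl ↦ ?_
  rw [← Nat.choose_mul_factorial_mul_factorial (mem_range_succ_iff.mp hl)]
  push_cast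
  ring

section FubiniSeries

variable {K : Type*} [Field K] [CharZero K]

noncomputable def fubiniSeries (x : K) : K⟦X⟧ := (1 - C x * (exp K - 1))⁻¹

theorem constantCoeff_fubiniSeries (x : K) : constantCoeff (fubiniSeries x) = 1 := by
  simp [fubiniSeries, constantCoeff_exp]

theorem derivative_fubiniSeries (x : K) :
    d⁄dX K (fubiniSeries x) = C x * fubiniSeries x * (fubiniSeries x * exp K) := by
  simp only [fubiniSeries, derivative_inv', map_sub, derivative_one, Derivation.leibniz,
    derivative_C, derivative_exp, smul_eq_mul]
  ring

theorem derivative_fubiniSeries_mul_exp (x : K) :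
    d⁄dX K (fubiniSeries x * exp K) =
      fubiniSeries x * exp K + C x * (fubiniSeries x * exp K) ^ 2 := by
  rw [Derivation.leibniz, derivative_fubiniSeries, derivative_exp, smul_eq_mul, smul_eq_mul]
  ring

theorem derivative_fubiniSeries_mul_pow (x : K) (k : ℕ) :
    d⁄dX K (fubiniSeries x * (fubiniSeries x * exp K) ^ k) =
      k * (fubiniSeries x * (fubiniSeries x * exp K) ^ k) +
        (k + 1) * C x * (fubiniSeries x * (fubiniSeries x * exp K) ^ (k + 1)) := by
  rw [Derivation.leibniz, derivative_fubiniSeries, derivative_pow, smul_eq_mul, smul_eq_mul,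
    derivative_fubiniSeries_mul_exp]
  rcases k with _ | k
  · simp only [Nat.cast_zero, zero_mul, mul_zero, zero_add]
    ring
  · push_cast
    ring

theorem iterate_derivative_fubiniSeries (x : K) (m : ℕ) :
    (d⁄dX K)^[m] (fubiniSeries x) = ∑ k ∈ range (m + 1),
      ((k ! * stirlingSecond m k : K) * x ^ k) •
        (fubiniSeries x * (fubiniSeries x * exp K) ^ k) := by
  have h := iterate_eq_sum_stirlingSecond_smul (d⁄dX K).toLinearMap.toAddMonoidHom
    (fun k ↦ ((k ! : K) * x ^ k) • (fubiniSeries x * (fubiniSeries x * exp K) ^ k))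
    (fun k ↦ ?_) m
  · simpa [← Nat.cast_smul_eq_nsmul K, smul_smul, mul_assoc, mul_left_comm] using h
  simp only [LinearMap.toAddMonoidHom_coe, Derivation.coeFn_coe]
  rw [Derivation.map_smul, derivative_fubiniSeries_mul_pow]
  simp only [smul_eq_C_mul, nsmul_eq_mul]
  push_cast [factorial_succ]
  simp only [map_add, map_mul, map_one, map_natCast, map_pow]
  ring

theorem factorial_mul_coeff_fubiniSeries (x : K) (n : ℕ) :
    n ! * coeff n (fubiniSeries x) =
      ∑ k ∈ range (n + 1), (k ! * stirlingSecond n k : K) * x ^ k := by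
  rw [← constantCoeff_iterate_derivative, iterate_derivative_fubiniSeries, map_sum]
  simp [constantCoeff_fubiniSeries, constantCoeff_exp]

end FubiniSeries

theorem fubiniOrd_natCast_eq (k : ℕ) (x : ℝ) (j : ℕ) :
    fubiniOrd k x k j = j ! * coeff j ((fubiniSeries x * exp ℝ) ^ k) := by
  rw [fubiniOrd, mul_pow, exp_pow_eq_rescale_exp]
  rfl

/-- Spivey-type recurrence for the classical Fubini polynomials
`F_n(x) = Σ_{k=0}^n k! {n brace k} x^k`:
`F_{n+m}(x) = Σ_{k=0}^m Σ_{l=0}^n k! {m brace k} C(n,l) x^k F_{n−l}^{(k)}(x,k) F_l(x)`,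
where `T n k = {n brace k}` is defined by `x^n = Σ_k T n k (x)_k`. -/
theorem stmt12 (T : ℕ → ℕ → ℝ)
    (hT : ∀ (n : ℕ) (x : ℝ), x ^ n = ∑ k ∈ Finset.range (n + 1), T n k * fallF x k)
    (n m : ℕ) (x : ℝ) :
    (∑ j ∈ Finset.range (n + m + 1), (Nat.factorial j : ℝ) * T (n + m) j * x ^ j) =
      ∑ k ∈ Finset.range (m + 1), ∑ l ∈ Finset.range (n + 1),
        (Nat.factorial k : ℝ) * T m k * (n.choose l : ℝ) * x ^ k *
          fubiniOrd k x (k : ℝ) (n - l) *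
          (∑ j ∈ Finset.range (l + 1), (Nat.factorial j : ℝ) * T l j * x ^ j) := by
  have hTS (N : ℕ) : ∀ j ∈ range (N + 1), T N j = stirlingSecond N j := fun j hj ↦
    eq_stirlingSecond_of_pow_eq_sum T hT (mem_range_succ_iff.mp hj)
  have hF (N : ℕ) : ∑ j ∈ range (N + 1), (j ! : ℝ) * T N j * x ^ j =
      N ! * coeff N (fubiniSeries x) := by
    rw [factorial_mul_coeff_fubiniSeries]
    exact sum_congr rfl fun j hj ↦ by rw [hTS N j hj]
  calc _ = (n ! : ℝ) * coeff n ((d⁄dX ℝ)^[m] (fubiniSeries x)) := by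
        rw [hF, factorial_mul_coeff_iterate_derivative]
    _ = ∑ k ∈ range (m + 1), (k ! * stirlingSecond m k * x ^ k) *
          (n ! * coeff n (fubiniSeries x * (fubiniSeries x * exp ℝ) ^ k)) := by
        rw [iterate_derivative_fubiniSeries, map_sum, mul_sum]
        refine sum_congr rfl fun k _ ↦ ?_
        rw [coeff_smul, smul_eq_mul]
        ring
    _ = _ := by
        refine sum_congr rfl fun k hk ↦ ?_
        rw [factorial_mul_coeff_mul, mul_sum]
        refine sum_congr rfl fun l _ ↦ ?_
        rw [hF, fubiniOrd_natCast_eq, hTS m k hk]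
        ring
end

section
/- For all nonnegative integers m and n and any x, the classical Bell polynomials satisfy Spivey's recurrence φ_{n+m}(x) = Σ_{k=0}^m Σ_{l=0}^n {m brace k} C(n,l) x^k k^{n−l} φ_l(x). -/
lemma fallF_add (y : ℝ) (k j : ℕ) :
    fallF y (k + j) = fallF y k * fallF (y - k) j := by
  unfold fallF
  rw [Finset.prod_range_add]
  congr 1
  refine Finset.prod_congr rfl fun i _ => ?_
  push_cast; ring

lemma fallF_nat_zero (t k : ℕ) (h : t < k) : fallF (t : ℝ) k = 0 := by
  apply Finset.prod_eq_zero (Finset.mem_range.mpr h)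
  simp

lemma fallF_nat_pos (t : ℕ) : 0 < fallF (t : ℝ) t := by
  apply Finset.prod_pos
  intro i hi
  have : (i : ℝ) < t := by exact_mod_cast Finset.mem_range.mp hi
  linarith

lemma fallF_unique (M : ℕ) (a : ℕ → ℝ)
    (h : ∀ y : ℝ, ∑ k ∈ Finset.range M, a k * fallF y k = 0) :
    ∀ k < M, a k = 0 := by
  intro k
  induction k using Nat.strong_induction_on with
  | _ k ih =>
    intro hk
    have h2 := h (k : ℝ)
    rw [Finset.sum_eq_single k] at h2
    · have := (fallF_nat_pos k).ne'
      rcases mul_eq_zero.mp h2 with h3 | h3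
      · exact h3
      · exact absurd h3 this
    · intro r hr hne
      rcases lt_or_gt_of_ne hne with hlt | hgt
      · rw [ih r hlt (lt_trans hlt hk)]; ring
      · rw [fallF_nat_zero k r hgt]; ring
    · intro h; exact absurd hk (by simpa using h)

/-- Spivey's recurrence for the classical Bell polynomials
`φ_n(x) = Σ_{k=0}^n {n brace k} x^k`, where the Stirling numbers of the second
kind `T n k = {n brace k}` are characterized by `x^n = Σ_k {n brace k} (x)_k`. -/
theorem stmt13 (T : ℕ → ℕ → ℝ)
    (hT : ∀ (m : ℕ) (x : ℝ), x ^ m = ∑ k ∈ Finset.range (m + 1), T m k * fallF x k)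
    (n m : ℕ) (x : ℝ) :
    (∑ k ∈ Finset.range (n + m + 1), T (n + m) k * x ^ k) =
      ∑ k ∈ Finset.range (m + 1), ∑ l ∈ Finset.range (n + 1),
        T m k * (n.choose l : ℝ) * x ^ k * (k : ℝ) ^ (n - l) *
          (∑ j ∈ Finset.range (l + 1), T l j * x ^ j) := by
  set N := n + m with hN
  -- coefficient of the triple sum
  set c : ℕ → ℕ → ℕ → ℝ := fun k l j =>
    T m k * (n.choose l : ℝ) * (k : ℝ) ^ (n - l) * T l j with hc
  -- regrouped coefficients
  set b : ℕ → ℝ := fun r =>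
    ∑ k ∈ Finset.range (m + 1), ∑ l ∈ Finset.range (n + 1), ∑ j ∈ Finset.range (l + 1),
      if k + j = r then c k l j else 0 with hb
  -- (i) regrouping identity
  have regroup : ∀ f : ℕ → ℝ,
      ∑ r ∈ Finset.range (N + 1), b r * f r =
      ∑ k ∈ Finset.range (m + 1), ∑ l ∈ Finset.range (n + 1), ∑ j ∈ Finset.range (l + 1),
        c k l j * f (k + j) := by
    intro f
    have step : ∀ r ∈ Finset.range (N + 1), b r * f r =
        ∑ k ∈ Finset.range (m + 1), ∑ l ∈ Finset.range (n + 1), ∑ j ∈ Finset.range (l + 1),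
          if k + j = r then c k l j * f r else 0 := by
      intro r _
      rw [hb]
      simp only [Finset.sum_mul, ite_mul, zero_mul]
    rw [Finset.sum_congr rfl step, Finset.sum_comm]
    refine Finset.sum_congr rfl fun k hk => ?_
    rw [Finset.sum_comm]
    refine Finset.sum_congr rfl fun l hl => ?_
    rw [Finset.sum_comm]
    refine Finset.sum_congr rfl fun j hj => ?_
    have hkj : k + j ∈ Finset.range (N + 1) := by
      have hk' := Finset.mem_range.mp hk
      have hl' := Finset.mem_range.mp hl
      have hj' := Finset.mem_range.mp hj
      refine Finset.mem_range.mpr ?_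
      omega
    rw [Finset.sum_ite_eq (Finset.range (N + 1)) (k + j) (fun r => c k l j * f r)]
    simp [hkj]
  -- (ii) the falling-factorial identity, for all y
  have star : ∀ y : ℝ,
      ∑ k ∈ Finset.range (m + 1), ∑ l ∈ Finset.range (n + 1), ∑ j ∈ Finset.range (l + 1),
        c k l j * fallF y (k + j) = y ^ N := by
    intro y
    have h1 : y ^ N = ∑ k ∈ Finset.range (m + 1), T m k * fallF y k * y ^ n := by
      rw [hN, pow_add, hT m y, Finset.mul_sum]
      exact Finset.sum_congr rfl fun k _ => by ring
    rw [h1]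
    refine (Finset.sum_congr rfl fun k hk => ?_).symm
    have h2 : y ^ n = ∑ l ∈ Finset.range (n + 1),
        (y - k) ^ l * (k : ℝ) ^ (n - l) * (n.choose l : ℝ) := by
      have := add_pow (y - (k : ℝ)) (k : ℝ) n
      simpa using this
    rw [h2, Finset.mul_sum]
    refine Finset.sum_congr rfl fun l hl => ?_
    rw [hT l (y - k), Finset.sum_mul, Finset.sum_mul, Finset.mul_sum]
    refine Finset.sum_congr rfl fun j hj => ?_
    rw [fallF_add y k j, hc]
    ring
  -- uniqueness: T N r = b r on range (N+1)
  have key : ∀ r < N + 1, T N r = b r := by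
    have h0 : ∀ y : ℝ, ∑ r ∈ Finset.range (N + 1), (T N r - b r) * fallF y r = 0 := by
      intro y
      have e1 : ∑ r ∈ Finset.range (N + 1), T N r * fallF y r = y ^ N := (hT N y).symm
      have e2 : ∑ r ∈ Finset.range (N + 1), b r * fallF y r = y ^ N := by
        rw [regroup (fun r => fallF y r)]; exact star y
      have : ∑ r ∈ Finset.range (N + 1), (T N r - b r) * fallF y r =
          (∑ r ∈ Finset.range (N + 1), T N r * fallF y r)
          - ∑ r ∈ Finset.range (N + 1), b r * fallF y r := by
        rw [← Finset.sum_sub_distrib]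
        exact Finset.sum_congr rfl fun r _ => by ring
      rw [this, e1, e2, sub_self]
    intro r hr
    have h4 : T N r - b r = 0 := fallF_unique (N + 1) (fun r => T N r - b r) h0 r hr
    linarith
  -- conclude
  calc ∑ r ∈ Finset.range (N + 1), T N r * x ^ r
      = ∑ r ∈ Finset.range (N + 1), b r * x ^ r :=
        Finset.sum_congr rfl fun r hr => by rw [key r (Finset.mem_range.mp hr)]
    _ = ∑ k ∈ Finset.range (m + 1), ∑ l ∈ Finset.range (n + 1), ∑ j ∈ Finset.range (l + 1),
          c k l j * x ^ (k + j) := regroup (fun r => x ^ r)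
    _ = _ := by
        refine Finset.sum_congr rfl fun k hk => Finset.sum_congr rfl fun l hl => ?_
        rw [Finset.mul_sum]
        refine Finset.sum_congr rfl fun j hj => ?_
        rw [hc, pow_add]
        ring
end
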